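/- Let Φ = A_n be the root system with roots e_i − e_j (i ≠ j) in ℝ^{n+1}. Let λ ∈ P_{≥0} be a dominant weight, μ ∈ Q+λ, and X ⊆ Φ^+. Then every vertex of the slice (μ + Span_ℝ(X)) ∩ Π(λ) belongs to Q+λ; in particular, the slices of permutohedra in Type A have lattice vertices. -/

import Mathlib

/-- The lattice `ℤ^n` inside `ℝ^n`. -/
def intLattice (n : ℕ) : Set (Fin n → ℝ) := {v | ∀ i, ∃ z : ℤ, v i = (z : ℝ)}

/-- The permutohedron `Π(a) ⊆ ℝ^{n+1}`: the convex hull of the coordinate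
permutations of `a`. -/
noncomputable def permA {n : ℕ} (a : Fin (n + 1) → ℝ) : Set (Fin (n + 1) → ℝ) :=
  convexHull ℝ {x | ∃ σ : Equiv.Perm (Fin (n + 1)), x = fun i => a (σ i)}

/-- For a partition with parts `lam 0 ≥ lam 1 ≥ …` (of length `l`), the quotient map
`quot_λ : ℝ^{n+1} ↠ ℝ^{ℓ(λ)}` whose `j`-th coordinate is the sum of the entries over
the `j`-th consecutive block of sizes `lam 0, …, lam (l-1)`. -/
noncomputable def quotPart {n : ℕ} (l : ℕ) (lam : Fin l → ℕ) (b : Fin (n + 1) → ℝ) :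
    Fin l → ℝ :=
  fun j => ∑ i ∈ Finset.univ.filter (fun i : Fin (n + 1) =>
      (∑ j' ∈ Finset.univ.filter (fun j' : Fin l => j' < j), lam j') ≤ i.1 ∧
        i.1 < (∑ j' ∈ Finset.univ.filter (fun j' : Fin l => j' < j), lam j') + lam j),
    b i

/-!
By Rado's theorem, `Π(a)` for decreasing `a` is cut out by `∑ x = ∑ a` and the inequalities
`∑_{i ∈ S} x i ≤ a 0 + ⋯ + a (#S - 1)`; the nontrivial inclusion follows by separating a point
from `Π(a)` with a linear functional and summing by parts along the functional's superlevel sets.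

Let `v` be a vertex of the slice and `F` the set of its non-integral coordinates. By
submodularity of the right-hand sides, the sets on which `v` is tight form a lattice, so every tight
set is a union of fibers of `i ↦ (smallest tight set containing i)`, and each such fiber is a
difference of two tight sets; hence `v` has an integral sum on each fiber. Since `v - μ ∈ Span X`,
`v` also has an integral sum on each connected component of the graph whose edges are the roots
in `X`. So every point of `F` shares its fiber and its component with another point of `F`, and
the conditions "zero sum on every fiber and on every component" leave a nonzero solution `d`
supported on `F`. Such a `d` lies in `Span X` and has zero sum on every tight set, so `v ± t d`
stays in the slice for small `t`, which contradicts that `v` is a vertex.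
-/

open Finset

section SumsOverSubsets

variable {ι M : Type*} [AddCommGroup M] [LinearOrder M] [IsOrderedAddMonoid M]

theorem Finset.sum_le_sum_of_forall_le_of_card_eq {f : ι → M} {A B : Finset ι}
    (hAB : ∀ x ∈ A, ∀ y ∈ B, f x ≤ f y) (hcard : #A = #B) :
    ∑ x ∈ A, f x ≤ ∑ y ∈ B, f y := by
  rcases A.eq_empty_or_nonempty with rfl | hA
  · simp [card_eq_zero.mp hcard.symm]
  obtain ⟨x, hx, hmax⟩ := A.exists_max_image f hA
  calc ∑ x ∈ A, f x ≤ #A • f x := sum_le_card_nsmul _ _ _ hmax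
    _ = #B • f x := by rw [hcard]
    _ ≤ ∑ y ∈ B, f y := card_nsmul_le_sum _ _ _ (hAB x hx)

theorem Antitone.sum_le_sum_of_isLowerSet [LinearOrder ι] {f : ι → M} (hf : Antitone f)
    {D U : Finset ι} (hD : IsLowerSet (D : Set ι)) (hcard : #U = #D) :
    ∑ i ∈ U, f i ≤ ∑ i ∈ D, f i := by
  classical
  have key : ∑ i ∈ U \ D, f i ≤ ∑ i ∈ D \ U, f i := by
    refine sum_le_sum_of_forall_le_of_card_eq (fun x hx y hy => hf ?_) (card_sdiff_comm hcard)
    by_contra hxy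
    exact (mem_sdiff.1 hx).2 (hD (not_le.1 hxy).le (mem_sdiff.1 hy).1)
  rw [← sub_nonpos, ← sum_sdiff_sub_sum_sdiff]
  exact sub_nonpos.2 key

end SumsOverSubsets

section SuperlevelSets

variable {ι : Type*} [DecidableEq ι]

/-- Summation by parts along the superlevel sets of `c`. -/
theorem sum_sub_mul_nonpos_of_sum_superlevel_nonpos {s : Finset ι} {c z : ι → ℝ} {t : ℝ}
    (hts : ∀ i ∈ s, t ≤ c i) (hz : ∀ i ∈ s, t < c i → ∑ j ∈ s with c i ≤ c j, z j ≤ 0) :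
    ∑ i ∈ s, (c i - t) * z i ≤ 0 := by
  induction s using Finset.induction_on_min_value c generalizing t with
  | empty => simp
  | insert a s ha hmin ih =>
    have hsplit : ∑ i ∈ insert a s, (c i - t) * z i =
        (c a - t) * ∑ i ∈ insert a s, z i + ∑ i ∈ s, (c i - c a) * z i := by
      rw [sum_insert ha, sum_insert ha, mul_add, mul_sum, add_assoc, ← sum_add_distrib]
      exact congrArg _ (sum_congr rfl fun _ _ => by ring)
    have hfirst : (c a - t) * ∑ i ∈ insert a s, z i ≤ 0 := by
      rcases (hts a (mem_insert_self a s)).lt_or_eq with hlt | heq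
      · have hall : ∑ j ∈ insert a s with c a ≤ c j, z j = ∑ j ∈ insert a s, z j :=
          sum_congr (filter_true_of_mem fun j hj => by
            rcases mem_insert.1 hj with rfl | hj
            exacts [le_rfl, hmin j hj]) fun _ _ => rfl
        exact mul_nonpos_of_nonneg_of_nonpos (by linarith)
          (hall ▸ hz a (mem_insert_self a s) hlt)
      · simp [heq]
    have hrest : ∑ i ∈ s, (c i - c a) * z i ≤ 0 := by
      refine ih hmin fun i hi hai => ?_
      have hfilter : (insert a s).filter (fun j => c i ≤ c j) = s.filter (fun j => c i ≤ c j) := by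
        rw [filter_insert, if_neg (not_le.2 hai)]
      rw [← hfilter]
      exact hz i (mem_insert_of_mem hi) ((hts a (mem_insert_self a s)).trans_lt hai)
    linarith

theorem sum_mul_le_sum_mul_of_sum_superlevel_le {s : Finset ι} {c x y : ι → ℝ}
    (hsum : ∑ i ∈ s, x i = ∑ i ∈ s, y i)
    (hle : ∀ i ∈ s, ∑ j ∈ s with c i ≤ c j, x j ≤ ∑ j ∈ s with c i ≤ c j, y j) :
    ∑ i ∈ s, c i * x i ≤ ∑ i ∈ s, c i * y i := by
  set t := -∑ i ∈ s, |c i|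
  have hts : ∀ i ∈ s, t ≤ c i := fun i hi =>
    neg_le.1 ((neg_le_abs (c i)).trans (single_le_sum (fun j _ => abs_nonneg (c j)) hi))
  have h := sum_sub_mul_nonpos_of_sum_superlevel_nonpos (z := x - y) hts fun i hi _ => by
    simpa [sum_sub_distrib] using hle i hi
  have hexp : ∑ i ∈ s, (c i - t) * (x - y) i =
      ∑ i ∈ s, c i * x i - ∑ i ∈ s, c i * y i - t * (∑ i ∈ s, x i - ∑ i ∈ s, y i) := by
    simp only [Pi.sub_apply, mul_sub, sub_mul, sum_sub_distrib, ← mul_sum]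
    ring
  rw [hexp, hsum, sub_self, mul_zero, sub_zero] at h
  linarith

end SuperlevelSets

section Fibers

variable {ι α : Type*} [DecidableEq α]

theorem two_mul_card_image_le {p : ι → α} {F : Finset ι}
    (hp : ∀ i ∈ F, ∃ j ∈ F, j ≠ i ∧ p j = p i) : 2 * #(F.image p) ≤ #F := by
  rw [card_eq_sum_card_image p F, mul_comm, ← smul_eq_mul]
  refine card_nsmul_le_sum _ _ _ fun a ha => ?_
  obtain ⟨i, hi, rfl⟩ := mem_image.1 ha
  obtain ⟨j, hj, hji, hpj⟩ := hp i hi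
  exact one_lt_card.2 ⟨i, by simp [hi], j, by simp [hj, hpj], hji.symm⟩

variable [Fintype ι]

theorem sum_eq_zero_of_sum_fiber_eq_zero {M : Type*} [AddCommMonoid M] {p : ι → α}
    {d : ι → M} (hd : ∀ a, ∑ j with p j = a, d j = 0) {S : Finset ι}
    (hS : ∀ i ∈ S, ∀ j, p j = p i → j ∈ S) : ∑ i ∈ S, d i = 0 := by
  rw [← sum_fiberwise_of_maps_to (g := p) fun i hi => mem_image_of_mem p hi]
  refine sum_eq_zero fun a ha => ?_
  obtain ⟨i, hi, rfl⟩ := mem_image.1 ha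
  rw [← hd (p i)]
  refine sum_congr (ext fun j => ?_) fun _ _ => rfl
  simp only [mem_filter, mem_univ, true_and]
  exact ⟨And.right, fun h => ⟨hS i hi j h, h⟩⟩

theorem sum_fiber_eq_zero_of_sum_fiber_ne_eq_zero {β M : Type*} [DecidableEq β]
    [AddCommMonoid M] {p : ι → α} {q : ι → β} {d : ι → M}
    (hp : ∀ a, ∑ j with p j = a, d j = 0) {b₀ : β} (hq : ∀ b ≠ b₀, ∑ j with q j = b, d j = 0) :
    ∑ j with q j = b₀, d j = 0 := by
  have htotal : ∑ j, d j = 0 := by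
    rw [← sum_fiberwise_of_maps_to (g := p) fun j _ => mem_image_of_mem p (mem_univ j)]
    exact sum_eq_zero fun a _ => by simpa using hp a
  rw [← sum_fiberwise_of_maps_to (g := q) fun j _ => mem_image_of_mem q (mem_univ j)] at htotal
  by_cases hb₀ : b₀ ∈ univ.image q
  · rw [sum_eq_single_of_mem b₀ hb₀ fun b _ hb => by simpa using hq b hb] at htotal
    simpa using htotal
  · exact sum_eq_zero fun j hj => absurd (mem_filter.1 hj).2 fun h => hb₀ (h ▸ by simp)

theorem sum_fiber_eq_zero_of_notMem_image {M : Type*} [AddCommMonoid M] {p : ι → α}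
    {F : Finset ι} {d : ι → M} (hd : ∀ j ∉ F, d j = 0) {a : α} (ha : a ∉ F.image p) :
    ∑ j with p j = a, d j = 0 :=
  sum_eq_zero fun j hj => hd j fun hjF => ha (mem_image.2 ⟨j, hjF, (mem_filter.1 hj).2⟩)

theorem AddSubgroup.exists_ne_notMem_of_sum_fiber_mem {M : Type*} [AddCommGroup M]
    (G : AddSubgroup M) [DecidablePred (· ∈ G)] {p : ι → α} {v : ι → M}
    (hp : ∀ i, ∑ j with p j = p i, v j ∈ G) :
    ∀ i ∈ univ.filter (v · ∉ G), ∃ j ∈ univ.filter (v · ∉ G), j ≠ i ∧ p j = p i := by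
  classical
  intro i hi
  by_contra! h
  simp only [mem_filter, mem_univ, true_and] at hi h
  have hi' : i ∈ univ.filter fun j => p j = p i := by simp
  have herase : ∑ j ∈ (univ.filter fun j => p j = p i).erase i, v j ∈ G :=
    sum_mem fun j hj => by
      by_contra hvj
      exact h j hvj (ne_of_mem_erase hj) (mem_filter.1 (mem_of_mem_erase hj)).2
  have hfiber := hp i
  rw [← add_sum_erase _ v hi'] at hfiber
  exact hi ((add_mem_cancel_right herase).1 hfiber)

/-- There are at most `#F / 2` fibers of each kind meeting `F`, and one condition is implied by
the others (both families compute the total sum), so fewer than `#F` conditions remain on vectors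
supported on `F`. -/
theorem exists_ne_zero_sum_fiber_eq_zero {K β : Type*} [Field K] [DecidableEq ι] [DecidableEq β]
    (p : ι → α) (q : ι → β) {F : Finset ι} (hF : F.Nonempty)
    (hp : ∀ i ∈ F, ∃ j ∈ F, j ≠ i ∧ p j = p i) (hq : ∀ i ∈ F, ∃ j ∈ F, j ≠ i ∧ q j = q i) :
    ∃ d : ι → K, d ≠ 0 ∧ (∀ a, ∑ j with p j = a, d j = 0) ∧ ∀ b, ∑ j with q j = b, d j = 0 := by
  obtain ⟨i₀, hi₀⟩ := hF
  let T : (ι → K) →ₗ[K] (↥Fᶜ → K) × (↥(F.image p) → K) × (↥((F.image q).erase (q i₀)) → K) :=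
    (LinearMap.pi fun j => LinearMap.proj j.1).prod
      ((LinearMap.pi fun a => ∑ j with p j = a.1, LinearMap.proj j).prod
        (LinearMap.pi fun b => ∑ j with q j = b.1, LinearMap.proj j))
  have hdim : Module.finrank K ((↥Fᶜ → K) × (↥(F.image p) → K) ×
      (↥((F.image q).erase (q i₀)) → K)) < Module.finrank K (ι → K) := by
    have h₁ := two_mul_card_image_le hp
    have h₂ := two_mul_card_image_le hq
    have h₃ := card_erase_of_mem (mem_image_of_mem q hi₀)
    have h₄ := card_compl_add_card F
    have h₅ := card_pos.2 ⟨i₀, hi₀⟩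
    simp only [Module.finrank_prod, Module.finrank_fintype_fun_eq_card, Fintype.card_coe]
    omega
  obtain ⟨d, hdT, hd0⟩ :=
    (Submodule.ne_bot_iff _).1 (LinearMap.ker_ne_bot_of_finrank_lt (f := T) hdim)
  simp only [T, LinearMap.ker_prod, Submodule.mem_inf, LinearMap.mem_ker, funext_iff,
    LinearMap.pi_apply, LinearMap.coe_proj, Function.eval, Pi.zero_apply, Subtype.forall,
    mem_compl, LinearMap.coe_sum, Finset.sum_apply] at hdT
  obtain ⟨hoff, hpF, hqF⟩ := hdT
  have hpsum (a : α) : ∑ j with p j = a, d j = 0 := by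
    by_cases ha : a ∈ F.image p
    exacts [hpF a ha, sum_fiber_eq_zero_of_notMem_image hoff ha]
  have hqsum (b : β) (hb : b ≠ q i₀) : ∑ j with q j = b, d j = 0 := by
    by_cases hbF : b ∈ F.image q
    exacts [hqF b (mem_erase.2 ⟨hb, hbF⟩), sum_fiber_eq_zero_of_notMem_image hoff hbF]
  refine ⟨d, hd0, hpsum, fun b => ?_⟩
  rcases eq_or_ne b (q i₀) with rfl | hb
  exacts [sum_fiber_eq_zero_of_sum_fiber_ne_eq_zero hpsum hqsum, hqsum b hb]

end Fibers

section LatticeHull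

variable {ι : Type*} [Fintype ι] [DecidableEq ι]

open scoped Classical in
noncomputable def latticeHull (𝒯 : Set (Finset ι)) (i : ι) : Finset ι :=
  (univ.filter fun S => S ∈ 𝒯 ∧ i ∈ S).inf id

variable {𝒯 : Set (Finset ι)}

theorem mem_latticeHull {i j : ι} : j ∈ latticeHull 𝒯 i ↔ ∀ S ∈ 𝒯, i ∈ S → j ∈ S := by
  classical
  simp [latticeHull, mem_inf]

theorem mem_latticeHull_self (i : ι) : i ∈ latticeHull 𝒯 i :=
  mem_latticeHull.2 fun _ _ hi => hi

theorem latticeHull_subset {i : ι} {S : Finset ι} (hS : S ∈ 𝒯) (hi : i ∈ S) :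
    latticeHull 𝒯 i ⊆ S :=
  fun _ hj => mem_latticeHull.1 hj S hS hi

theorem latticeHull_mem (hinf : InfClosed 𝒯) (huniv : univ ∈ 𝒯) (i : ι) :
    latticeHull 𝒯 i ∈ 𝒯 := by
  classical
  exact hinf.finsetInf_mem ⟨univ, by simp [huniv]⟩ fun S hS => (mem_filter.1 hS).2.1

theorem exists_filter_latticeHull_eq_sdiff (h𝒯 : IsSublattice 𝒯) (hempty : ∅ ∈ 𝒯)
    (huniv : univ ∈ 𝒯) (i : ι) :
    ∃ A ∈ 𝒯, ∃ B ∈ 𝒯, B ⊆ A ∧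
      univ.filter (fun j => latticeHull 𝒯 j = latticeHull 𝒯 i) = A \ B := by
  have hmem := latticeHull_mem h𝒯.infClosed huniv
  have hsub {j k : ι} (hk : k ∈ latticeHull 𝒯 j) : latticeHull 𝒯 k ⊆ latticeHull 𝒯 j :=
    latticeHull_subset (hmem j) hk
  set B := (latticeHull 𝒯 i).filter fun j => i ∉ latticeHull 𝒯 j
  have hB : B.sup (latticeHull 𝒯) = B := by
    refine (Finset.sup_le fun j hj k hk => ?_).antisymm
      fun j hj => mem_sup.2 ⟨j, hj, mem_latticeHull_self j⟩
    simp only [B, mem_filter] at hj ⊢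
    exact ⟨hsub hj.1 hk, fun hi => hj.2 (hsub hk hi)⟩
  refine ⟨_, hmem i, B, ?_, filter_subset _ _, ?_⟩
  · rw [← hB]
    exact sup_induction hempty (fun _ h₁ _ h₂ => h𝒯.supClosed h₁ h₂) fun j _ => hmem j
  · ext j
    simp only [B, mem_filter, mem_univ, true_and, mem_sdiff, not_and, not_not]
    exact ⟨fun h => ⟨h ▸ mem_latticeHull_self j, fun _ => h ▸ mem_latticeHull_self i⟩,
      fun h => (hsub h.1).antisymm (hsub (h.2 h.1))⟩

theorem AddSubgroup.sum_filter_latticeHull_mem {M : Type*} [AddCommGroup M] (G : AddSubgroup M)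
    {v : ι → M} (h𝒯 : IsSublattice 𝒯) (hempty : ∅ ∈ 𝒯) (huniv : univ ∈ 𝒯)
    (hG : ∀ S ∈ 𝒯, ∑ j ∈ S, v j ∈ G) (i : ι) :
    ∑ j with latticeHull 𝒯 j = latticeHull 𝒯 i, v j ∈ G := by
  obtain ⟨A, hA, B, hB, hBA, h⟩ := exists_filter_latticeHull_eq_sdiff h𝒯 hempty huniv i
  rw [h, sum_sdiff_eq_sub hBA]
  exact sub_mem (hG A hA) (hG B hB)

theorem sum_eq_zero_of_sum_fiber_latticeHull_eq_zero {M : Type*} [AddCommMonoid M] {d : ι → M}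
    (hd : ∀ A, ∑ j with latticeHull 𝒯 j = A, d j = 0) {S : Finset ι} (hS : S ∈ 𝒯) :
    ∑ i ∈ S, d i = 0 :=
  sum_eq_zero_of_sum_fiber_eq_zero hd fun _ hi j hj =>
    latticeHull_subset hS hi (hj ▸ mem_latticeHull_self j)

end LatticeHull

section DifferenceGraph

variable {ι R : Type*} [DecidableEq ι] [Ring R] (X : Set (ι → R))

def differenceGraph : SimpleGraph ι :=
  SimpleGraph.fromRel fun s t => Pi.single s 1 - Pi.single t 1 ∈ X

variable {X}

theorem single_sub_single_mem_span_of_reachable {s t : ι}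
    (h : (differenceGraph X).Reachable s t) :
    Pi.single s 1 - Pi.single t 1 ∈ Submodule.span R X := by
  rw [SimpleGraph.reachable_iff_reflTransGen] at h
  induction h with
  | refl => simp
  | @tail u w _ hadj ih =>
    rw [← sub_add_sub_cancel _ (Pi.single u 1)]
    refine add_mem ih ?_
    rcases ((SimpleGraph.fromRel_adj _ _ _).1 hadj).2 with hX | hX
    · exact Submodule.subset_span hX
    · simpa using neg_mem (Submodule.subset_span (R := R) hX)

variable [Fintype ι] [DecidableEq (differenceGraph X).ConnectedComponent]

theorem sum_connectedComponent_eq_zero_of_mem_span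
    (hX : ∀ x ∈ X, ∃ s t, x = Pi.single s 1 - Pi.single t 1) {w : ι → R}
    (hw : w ∈ Submodule.span R X) (C : (differenceGraph X).ConnectedComponent) :
    ∑ j with (differenceGraph X).connectedComponentMk j = C, w j = 0 := by
  induction hw using Submodule.span_induction with
  | mem x hx =>
    obtain ⟨s, t, rfl⟩ := hX x hx
    have hst : (differenceGraph X).connectedComponentMk s =
        (differenceGraph X).connectedComponentMk t := by
      rcases eq_or_ne s t with rfl | hne
      · rfl
      · exact SimpleGraph.ConnectedComponent.eq.2
          ((SimpleGraph.fromRel_adj _ _ _).2 ⟨hne, Or.inl hx⟩).reachable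
    simp [sum_sub_distrib, sum_pi_single', hst]
  | zero => simp
  | add x y _ _ hx hy => simp [sum_add_distrib, hx, hy]
  | smul r x _ hx => simp [← mul_sum, hx]

theorem mem_span_of_sum_connectedComponent_eq_zero {d : ι → R}
    (hd : ∀ C, ∑ j with (differenceGraph X).connectedComponentMk j = C, d j = 0) :
    d ∈ Submodule.span R X := by
  set root : ι → ι := fun j => ((differenceGraph X).connectedComponentMk j).out
  have hroot (j : ι) : (differenceGraph X).Reachable j (root j) :=
    SimpleGraph.ConnectedComponent.eq.1 (Quot.out_eq _).symm
  have hsplit : d = ∑ j, d j • (Pi.single j 1 - Pi.single (root j) 1) +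
      ∑ j, d j • Pi.single (root j) 1 := by
    simp only [smul_sub, sum_sub_distrib, sub_add_cancel]
    ext k
    simp [Pi.single_apply]
  have hzero : ∑ j, d j • (Pi.single (root j) 1 : ι → R) = 0 := by
    rw [← sum_fiberwise_of_maps_to (g := (differenceGraph X).connectedComponentMk)
      fun j _ => mem_image_of_mem _ (mem_univ j)]
    refine sum_eq_zero fun C _ => ?_
    have hC : ∀ j ∈ univ.filter fun j => (differenceGraph X).connectedComponentMk j = C,
        d j • (Pi.single (root j) 1 : ι → R) = d j • Pi.single C.out 1 := fun j hj => by
      simp only [root, (mem_filter.1 hj).2]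
    rw [sum_congr rfl hC, ← sum_smul, hd C, zero_smul]
  rw [hsplit, hzero, add_zero]
  exact sum_mem fun j _ => Submodule.smul_mem _ _
    (single_sub_single_mem_span_of_reachable (hroot j))

end DifferenceGraph

theorem eq_zero_of_mem_extremePoints_of_eventually {E : Type*} [AddCommGroup E] [Module ℝ E]
    {s : Set E} {x d : E} (hx : x ∈ s.extremePoints ℝ)
    (hd : ∀ᶠ t in nhds (0 : ℝ), x + t • d ∈ s) : d = 0 := by
  obtain ⟨ε, hε, hball⟩ := Metric.eventually_nhds_iff.1 hd
  have hε2 : |ε / 2| < ε := by rw [abs_of_pos (half_pos hε)]; linarith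
  have hmem (t : ℝ) (ht : |t| < ε) : x + t • d ∈ s := hball (by simpa using ht)
  have h := hx.2 (hmem (-(ε / 2)) (by rwa [abs_neg])) (hmem (ε / 2) hε2)
    ⟨1 / 2, 1 / 2, by norm_num, by norm_num, by norm_num, by module⟩
  have hzero : (-(ε / 2)) • d = 0 := by simpa using h
  exact (smul_eq_zero.1 hzero).resolve_left (neg_ne_zero.2 (half_pos hε).ne')

section Majorization

variable {m : ℕ}

theorem Fin.card_filter_val_lt_of_le {k : ℕ} (hk : k ≤ m) :
    #(univ.filter fun i : Fin m => i.val < k) = k := by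
  rw [Fin.card_filter_val_lt, min_eq_right hk]

theorem Fin.isLowerSet_filter_val_lt (k : ℕ) :
    IsLowerSet ((univ.filter fun i : Fin m => i.val < k : Finset (Fin m)) : Set (Fin m)) :=
  fun i j hji hi => by
    rw [mem_coe, mem_filter] at hi ⊢
    exact ⟨mem_univ j, lt_of_le_of_lt hji hi.2⟩

/-- For antitone `a`, the sum of the `k` largest entries of `a`. -/
noncomputable def topSum (a : Fin m → ℝ) (k : ℕ) : ℝ := ∑ i : Fin m with i.val < k, a i

theorem topSum_fintype_card (a : Fin m → ℝ) : topSum a m = ∑ i, a i := by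
  simp [topSum]

variable {a : Fin m → ℝ}

theorem sum_le_topSum (ha : Antitone a) (S : Finset (Fin m)) : ∑ i ∈ S, a i ≤ topSum a #S :=
  ha.sum_le_sum_of_isLowerSet (U := S) (Fin.isLowerSet_filter_val_lt _)
    (Fin.card_filter_val_lt_of_le (card_finset_fin_le S)).symm

theorem sum_eq_topSum_of_isLowerSet (ha : Antitone a) {D : Finset (Fin m)}
    (hD : IsLowerSet (D : Set (Fin m))) : ∑ i ∈ D, a i = topSum a #D :=
  (sum_le_topSum ha D).antisymm <|
    ha.sum_le_sum_of_isLowerSet hD (Fin.card_filter_val_lt_of_le (card_finset_fin_le D))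

/-- The first `#(S ∪ T)` and the first `#(S ∩ T)` indices can be redistributed into the first
`#S` indices and a set `R` of size `#T`. -/
theorem topSum_card_union_add_topSum_card_inter_le (ha : Antitone a) (S T : Finset (Fin m)) :
    topSum a #(S ∪ T) + topSum a #(S ∩ T) ≤ topSum a #S + topSum a #T := by
  set seg : ℕ → Finset (Fin m) := fun k => univ.filter fun i : Fin m => i.val < k
  have hseg_mono {k l : ℕ} (hkl : k ≤ l) : seg k ⊆ seg l := fun i hi => by
    simp only [seg, mem_filter] at hi ⊢
    exact ⟨hi.1, hi.2.trans_le hkl⟩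
  have hcard (U : Finset (Fin m)) : #(seg #U) = #U :=
    Fin.card_filter_val_lt_of_le (card_finset_fin_le U)
  have hinter := card_le_card (inter_subset_left (s₁ := S) (s₂ := T))
  have hunion := card_le_card (subset_union_left (s₁ := S) (s₂ := T))
  have hmod := card_union_add_card_inter S T
  set R := seg #(S ∩ T) ∪ (seg #(S ∪ T) \ seg #S)
  have hdisj : Disjoint (seg #(S ∩ T)) (seg #(S ∪ T) \ seg #S) :=
    disjoint_sdiff.mono_left (hseg_mono hinter)
  have hR : #R = #T := by
    rw [card_union_of_disjoint hdisj, card_sdiff_of_subset (hseg_mono hunion), hcard, hcard,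
      hcard]
    omega
  calc topSum a #(S ∪ T) + topSum a #(S ∩ T)
      = topSum a #S + ∑ i ∈ R, a i := by
        rw [sum_union hdisj, sum_sdiff_eq_sub (hseg_mono hunion)]
        simp only [topSum, seg]
        ring
    _ ≤ topSum a #S + topSum a #T := by
        grw [sum_le_topSum ha R, hR]

def majorizationPolytope (a : Fin m → ℝ) : Set (Fin m → ℝ) :=
  {x | (∀ S : Finset (Fin m), ∑ i ∈ S, x i ≤ topSum a #S) ∧ ∑ i, x i = ∑ i, a i}

theorem convex_majorizationPolytope (a : Fin m → ℝ) : Convex ℝ (majorizationPolytope a) := by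
  intro x hx y hy s t hs ht hst
  have hsum (S : Finset (Fin m)) :
      ∑ i ∈ S, (s • x + t • y) i = s * ∑ i ∈ S, x i + t * ∑ i ∈ S, y i := by
    simp [sum_add_distrib, mul_sum]
  refine ⟨fun S => ?_, ?_⟩
  · calc ∑ i ∈ S, (s • x + t • y) i
        = s * ∑ i ∈ S, x i + t * ∑ i ∈ S, y i := hsum S
      _ ≤ s * topSum a #S + t * topSum a #S :=
          add_le_add (mul_le_mul_of_nonneg_left (hx.1 S) hs)
            (mul_le_mul_of_nonneg_left (hy.1 S) ht)
      _ = topSum a #S := by rw [← add_mul, hst, one_mul]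
  · rw [hsum, hx.2, hy.2, ← add_mul, hst, one_mul]

/-- The permutation ordering `a` like `c` works. -/
theorem exists_perm_sum_mul_le {x : Fin m → ℝ} (ha : Antitone a)
    (hx : x ∈ majorizationPolytope a) (c : Fin m → ℝ) :
    ∃ σ : Equiv.Perm (Fin m), ∑ i, c i * x i ≤ ∑ i, c i * a (σ i) := by
  classical
  set τ := Tuple.sort (fun i => -c i)
  have hτ : Antitone (c ∘ τ) := fun k l hkl => by
    simpa [τ] using Tuple.monotone_sort (fun i => -c i) hkl
  refine ⟨τ.symm, sum_mul_le_sum_mul_of_sum_superlevel_le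
    (hx.2.trans (Equiv.sum_comp τ.symm a).symm) fun i _ => ?_⟩
  set L := univ.filter fun j => c i ≤ c j
  set D := univ.filter fun k => c i ≤ c (τ k)
  have hmem (j : Fin m) : j ∈ L ↔ τ.symm j ∈ D := by simp [L, D]
  have hD : IsLowerSet (D : Set (Fin m)) := fun k l hlk hk => by
    rw [mem_coe, mem_filter] at hk ⊢
    exact ⟨mem_univ l, hk.2.trans (hτ hlk)⟩
  calc ∑ j ∈ L, x j ≤ topSum a #L := hx.1 L
    _ = topSum a #D := by rw [card_equiv τ.symm hmem]
    _ = ∑ j ∈ L, a (τ.symm j) :=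
        ((sum_equiv τ.symm hmem fun _ _ => rfl).trans (sum_eq_topSum_of_isLowerSet ha hD)).symm

end Majorization

section Rado

variable {n : ℕ} {a : Fin (n + 1) → ℝ}

theorem permA_subset_majorizationPolytope (ha : Antitone a) :
    permA a ⊆ majorizationPolytope a := by
  refine convexHull_min ?_ (convex_majorizationPolytope a)
  rintro x ⟨σ, rfl⟩
  refine ⟨fun S => ?_, Equiv.sum_comp σ a⟩
  calc ∑ i ∈ S, a (σ i) = ∑ j ∈ S.image σ, a j :=
        (sum_image fun i _ j _ h => σ.injective h).symm
    _ ≤ topSum a #(S.image σ) := sum_le_topSum ha _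
    _ = topSum a #S := by rw [card_image_of_injective S σ.injective]

theorem majorizationPolytope_subset_permA (ha : Antitone a) :
    majorizationPolytope a ⊆ permA a := by
  intro x hx
  by_contra hxP
  have hfin : {y | ∃ σ : Equiv.Perm (Fin (n + 1)), y = fun i => a (σ i)}.Finite :=
    (Set.finite_range fun σ : Equiv.Perm (Fin (n + 1)) => fun i => a (σ i)).subset
      fun _ ⟨σ, hσ⟩ => ⟨σ, hσ.symm⟩
  obtain ⟨f, u, hfP, hfx⟩ :=
    geometric_hahn_banach_closed_point (convex_convexHull ℝ _) (hfin.isClosed_convexHull ℝ) hxP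
  set c : Fin (n + 1) → ℝ := fun i => f fun j => if i = j then 1 else 0
  have hf (y : Fin (n + 1) → ℝ) : f y = ∑ i, c i * y i := by
    simpa [mul_comm] using f.toLinearMap.pi_apply_eq_sum_univ y
  obtain ⟨σ, hσ⟩ := exists_perm_sum_mul_le ha hx c
  have hfσ := hfP _ (subset_convexHull ℝ _ ⟨σ, rfl⟩)
  rw [hf] at hfσ hfx
  linarith

theorem permA_eq_majorizationPolytope (ha : Antitone a) :
    permA a = majorizationPolytope a :=
  (permA_subset_majorizationPolytope ha).antisymm (majorizationPolytope_subset_permA ha)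

end Rado

section TightSets

variable {m : ℕ} {a x : Fin m → ℝ}

def tightSets (a x : Fin m → ℝ) : Set (Finset (Fin m)) := {S | ∑ i ∈ S, x i = topSum a #S}

theorem empty_mem_tightSets : ∅ ∈ tightSets a x := by
  simp [tightSets, topSum]

theorem univ_mem_tightSets (hx : x ∈ majorizationPolytope a) : univ ∈ tightSets a x := by
  simp only [tightSets, Set.mem_ofPred_eq, card_univ, Fintype.card_fin, topSum_fintype_card, hx.2]

theorem union_mem_tightSets_and_inter_mem (ha : Antitone a) (hx : x ∈ majorizationPolytope a)
    {S T : Finset (Fin m)} (hS : S ∈ tightSets a x) (hT : T ∈ tightSets a x) :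
    S ∪ T ∈ tightSets a x ∧ S ∩ T ∈ tightSets a x := by
  have hsum := sum_union_inter (s₁ := S) (s₂ := T) (f := x)
  have hsub := topSum_card_union_add_topSum_card_inter_le ha S T
  have h₁ := hx.1 (S ∪ T)
  have h₂ := hx.1 (S ∩ T)
  simp only [tightSets, Set.mem_ofPred_eq] at hS hT ⊢
  constructor <;> linarith

theorem isSublattice_tightSets (ha : Antitone a) (hx : x ∈ majorizationPolytope a) :
    IsSublattice (tightSets a x) :=
  ⟨fun _ hS _ hT => (union_mem_tightSets_and_inter_mem ha hx hS hT).1,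
    fun _ hS _ hT => (union_mem_tightSets_and_inter_mem ha hx hS hT).2⟩

theorem eventually_add_smul_mem_majorizationPolytope (hx : x ∈ majorizationPolytope a)
    {d : Fin m → ℝ} (hd : ∀ S ∈ tightSets a x, ∑ i ∈ S, d i = 0) :
    ∀ᶠ t in nhds (0 : ℝ), x + t • d ∈ majorizationPolytope a := by
  have hsum (S : Finset (Fin m)) (t : ℝ) :
      ∑ i ∈ S, (x + t • d) i = ∑ i ∈ S, x i + t * ∑ i ∈ S, d i := by
    simp [sum_add_distrib, mul_sum]
  have huniv := hd univ (univ_mem_tightSets hx)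
  refine (Filter.eventually_all.2 fun S => ?_).mono fun t ht =>
    ⟨ht, by rw [hsum, huniv, mul_zero, add_zero, hx.2]⟩
  by_cases hS : S ∈ tightSets a x
  · exact .of_forall fun t => by rw [hsum, hd S hS, mul_zero, add_zero]; exact hS.le
  · have hcont : Continuous fun t : ℝ => ∑ i ∈ S, x i + t * ∑ i ∈ S, d i := by fun_prop
    filter_upwards [hcont.continuousAt.eventually_lt continuousAt_const
      (by simpa using (hx.1 S).lt_of_ne hS)] with t ht
    exact (hsum S t).trans_le ht.le

theorem eq_zero_of_mem_extremePoints_slice {μ d : Fin m → ℝ} {V : Submodule ℝ (Fin m → ℝ)}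
    (hx : x ∈ ({y | ∃ w ∈ V, y = μ + w} ∩ majorizationPolytope a).extremePoints ℝ)
    (hdV : d ∈ V) (hd : ∀ S ∈ tightSets a x, ∑ i ∈ S, d i = 0) : d = 0 := by
  obtain ⟨⟨w, hw, rfl⟩, hxK⟩ := hx.1
  refine eq_zero_of_mem_extremePoints_of_eventually hx ?_
  filter_upwards [eventually_add_smul_mem_majorizationPolytope hxK hd] with t ht
  exact ⟨⟨w + t • d, add_mem hw (V.smul_mem t hdV), by rw [add_assoc]⟩, ht⟩

end TightSets

theorem typeA_slices_have_lattice_vertices_general (n : ℕ) (a : Fin (n + 1) → ℤ)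
    (ha : ∀ s t : Fin (n + 1), s ≤ t → a t ≤ a s)
    (μ : Fin (n + 1) → ℝ)
    (hμint : ∀ t, ∃ z : ℤ, μ t = (z : ℝ))
    (X : Set (Fin (n + 1) → ℝ))
    (hX : ∀ x ∈ X, ∃ s t : Fin (n + 1), s < t ∧
      x = Pi.single s (1 : ℝ) - Pi.single t 1)
    (v : Fin (n + 1) → ℝ)
    (hv : v ∈ Set.extremePoints ℝ
      ({y | ∃ s ∈ Submodule.span ℝ X, y = μ + s} ∩ permA (fun t => (a t : ℝ)))) :
    (∀ t, ∃ z : ℤ, v t = (z : ℝ)) ∧ ∑ t, v t = ∑ t, (a t : ℝ) := by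
  classical
  have hb : Antitone fun t => (a t : ℝ) := fun s t hst => Int.cast_le.2 (ha s t hst)
  set Z := (Int.castAddHom ℝ).range
  have hZ (x : ℝ) : x ∈ Z ↔ ∃ z : ℤ, x = z := by
    simp only [Z, AddMonoidHom.mem_range, Int.coe_castAddHom, eq_comm]
  rw [permA_eq_majorizationPolytope hb] at hv
  obtain ⟨⟨w, hw, hvw⟩, hvK⟩ := hv.1
  refine ⟨fun t => (hZ _).1 (not_not.1 fun ht => ?_), hvK.2⟩
  have hcomp (C : (differenceGraph X).ConnectedComponent) :
      ∑ j with (differenceGraph X).connectedComponentMk j = C, v j ∈ Z := by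
    rw [hvw]
    simp only [Pi.add_apply, sum_add_distrib, add_zero, sum_connectedComponent_eq_zero_of_mem_span
      (fun x hx => let ⟨s, t, _, h⟩ := hX x hx; ⟨s, t, h⟩) hw]
    exact sum_mem fun j _ => (hZ _).2 (hμint j)
  have htight (i : Fin (n + 1)) : ∑ j with latticeHull (tightSets _ v) j =
      latticeHull (tightSets _ v) i, v j ∈ Z :=
    Z.sum_filter_latticeHull_mem (isSublattice_tightSets hb hvK) empty_mem_tightSets
      (univ_mem_tightSets hvK) (fun S hS => hS ▸ sum_mem fun i _ => (hZ _).2 ⟨a i, rfl⟩) i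
  obtain ⟨d, hd0, hd𝒯, hdX⟩ := exists_ne_zero_sum_fiber_eq_zero (K := ℝ)
    (latticeHull (tightSets _ v)) (differenceGraph X).connectedComponentMk
    ⟨t, by simpa using ht⟩ (Z.exists_ne_notMem_of_sum_fiber_mem htight)
    (Z.exists_ne_notMem_of_sum_fiber_mem fun _ => hcomp _)
  exact hd0 (eq_zero_of_mem_extremePoints_slice hv (mem_span_of_sum_connectedComponent_eq_zero hdX)
    fun S hS => sum_eq_zero_of_sum_fiber_latticeHull_eq_zero hd𝒯 hS)

/-- slices of permutohedra in Type A have lattice vertices: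
in the root system `A_n`, realized in `ℝ^{n+1}` with roots `e_s − e_t`, weight
lattice `ℤ^{n+1}` and root lattice `Q = {integer vectors with coordinate sum 0}`,
for a dominant weight `λ = a` (a decreasing integer vector), a weight
`μ ∈ Q + λ` (an integer vector with the same coordinate sum as `a`), and a set
`X ⊆ Φ^+` of positive roots, every vertex (extreme point) of the slice
`(μ + Span_ℝ(X)) ∩ Π(λ)` lies in `Q + λ`. -/
theorem typeA_slices_have_lattice_vertices (n : ℕ) (a : Fin (n + 1) → ℤ)
    (ha : ∀ s t : Fin (n + 1), s ≤ t → a t ≤ a s)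
    (μ : Fin (n + 1) → ℝ)
    (hμint : ∀ t, ∃ z : ℤ, μ t = (z : ℝ)) (hμsum : ∑ t, μ t = ∑ t, (a t : ℝ))
    (X : Set (Fin (n + 1) → ℝ))
    (hX : ∀ x ∈ X, ∃ s t : Fin (n + 1), s < t ∧
      x = Pi.single s (1 : ℝ) - Pi.single t 1)
    (v : Fin (n + 1) → ℝ)
    (hv : v ∈ Set.extremePoints ℝ
      ({y | ∃ s ∈ Submodule.span ℝ X, y = μ + s} ∩ permA (fun t => (a t : ℝ)))) :
    (∀ t, ∃ z : ℤ, v t = (z : ℝ)) ∧ ∑ t, v t = ∑ t, (a t : ℝ) :=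
  typeA_slices_have_lattice_vertices_general n a ha μ hμint X hX v hv
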